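/- arXiv:1009.3478 — 3 statements merged into one kernel-verified Lean document; each statement's English description precedes it below -/
import Mathlib

section
/- The polynomial P₄(b,c) = 1 + 3b + 2b² + 3c + 3bc + c² is irreducible in ℂ[b,c]. -/
/-!
As a polynomial in `c` over `ℂ[b]`, `P₄ = c² + 3(b + 1) c + (b + 1)(2b + 1)`. The linear and
constant coefficients are divisible by the prime `b + 1`, and the constant one is not divisible
by `(b + 1)²` because `2b + 1` does not vanish at `b = -1`. So `P₄` is Eisenstein at `b + 1`.
-/

open MvPolynomial

namespace Polynomial

theorem irreducible_X_sq_add_C_mul_X_add_C_of_prime {R : Type*} [CommRing R] [IsDomain R]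
    {p : R} (hp : Prime p) (u : R) {v : R} (hv : ¬p ∣ v) :
    Irreducible (X ^ 2 + C (p * u) * X + C (p * v)) := by
  have hmonic : (X ^ 2 + C (p * u) * X + C (p * v)).Monic := by monicity!
  have hdeg : (X ^ 2 + C (p * u) * X + C (p * v)).natDegree = 2 := by compute_degree!
  refine IsEisensteinAt.irreducible (𝓟 := Ideal.span {p}) ⟨?_, ?_, ?_⟩
    ((Ideal.span_singleton_prime hp.ne_zero).mpr hp) hmonic.isPrimitive (by omega)
  · rw [hmonic.leadingCoeff, Ideal.mem_span_singleton]
    exact hp.not_dvd_one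
  · intro n hn
    rw [hdeg] at hn
    interval_cases n <;> simp [Ideal.mem_span_singleton]
  · rw [Ideal.span_singleton_pow, Ideal.mem_span_singleton]
    simpa [pow_two, mul_dvd_mul_iff_left hp.ne_zero] using hv

theorem X_sub_C_neg_one_not_dvd_two_mul_X_add_one {R : Type*} [CommRing R] [Nontrivial R] :
    ¬(X - C (-1) : R[X]) ∣ 2 * X + 1 := by
  rw [dvd_iff_isRoot]
  norm_num

end Polynomial

/-- `X 0` plays the role of `b` and `X 1` the role of `c`. -/
theorem P4_irreducible :
    Irreducible ((1 + 3 * X 0 + 2 * X 0 ^ 2 + 3 * X 1 + 3 * X 0 * X 1 + X 1 ^ 2 :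
      MvPolynomial (Fin 2) ℂ)) := by
  have eisenstein := Polynomial.irreducible_X_sq_add_C_mul_X_add_C_of_prime
    (Polynomial.prime_X_sub_C (-1 : ℂ)) 3 Polynomial.X_sub_C_neg_one_not_dvd_two_mul_X_add_one
  convert (MulEquiv.irreducible_iff (Polynomial.Bivariate.equivMvPolynomial ℂ)).mpr eisenstein
  simp only [map_neg, map_one, sub_neg_eq_add, map_mul, map_add, map_pow,
    map_ofNat Polynomial.C, map_ofNat (Polynomial.Bivariate.equivMvPolynomial ℂ),
    Polynomial.Bivariate.equivMvPolynomial_X, Polynomial.Bivariate.equivMvPolynomial_C_X]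
  ring
end

section
/- Setting P₃ = 1 + b + c and P₄ = 1 + 3b + 2b² + 3c + 3bc + c², the polynomials P₃ and P₄ are coprime in ℂ[b,c]. -/
/-!
With `b = X 0` and `c = X 1`, the identity `(1 + b) P₃ + P₃² - P₄ = 1 + b` shows that a common
divisor of `P₃` and `P₄` divides `1 + b`, hence also `c = P₃ - (1 + b)`. But `c` is prime and does
not divide `1 + b` (set `b = c = 0`), so such a divisor is a unit.
-/

open MvPolynomial

theorem MvPolynomial.X_not_dvd_one_add_X {σ R : Type*} [CommRing R] [Nontrivial R] (i j : σ) :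
    ¬ (X i : MvPolynomial σ R) ∣ 1 + X j := fun h => by
  simpa using map_dvd (eval (0 : σ → R)) h

theorem MvPolynomial.isRelPrime_X_one_add_X {σ R : Type*} [CommRing R] [IsDomain R] (i j : σ) :
    IsRelPrime (X i : MvPolynomial σ R) (1 + X j) :=
  X_prime.irreducible.isRelPrime_iff_not_dvd.mpr (X_not_dvd_one_add_X i j)

/-- `P₃ = 1 + b + c` and `P₄ = 1 + 3b + 2b² + 3c + 3bc + c²` have no common non-unit
factor in `ℂ[b,c]` (with `X 0 = b`, `X 1 = c`), i.e. they are coprime in the UFD sense. -/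
theorem P3_P4_coprime :
    ∀ d : MvPolynomial (Fin 2) ℂ,
      d ∣ (1 + X 0 + X 1) →
      d ∣ (1 + 3 * X 0 + 2 * (X 0)^2 + 3 * X 1 + 3 * (X 0) * (X 1) + (X 1)^2) →
      IsUnit d := by
  intro d h3 h4
  have hb : d ∣ (1 + X 0 : MvPolynomial (Fin 2) ℂ) := by
    have identity : (1 + X 0 : MvPolynomial (Fin 2) ℂ)
        = (1 + X 0) * (1 + X 0 + X 1) + (1 + X 0 + X 1) ^ 2
          - (1 + 3 * X 0 + 2 * (X 0)^2 + 3 * X 1 + 3 * (X 0) * (X 1) + (X 1)^2) := by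
      ring
    rw [identity]
    exact dvd_sub (dvd_add (h3.mul_left _) (dvd_pow h3 two_ne_zero)) h4
  have hc : d ∣ (X 1 : MvPolynomial (Fin 2) ℂ) := by
    simpa using dvd_sub h3 hb
  exact isRelPrime_X_one_add_X 1 0 hc hb
end

section
/- After the change of coordinates moving p = [0:1:-1] to the origin of the affine chart b = 1, i.e., considering H(a, 1, c−1), the resulting polynomial in ℂ[a,c] has zero homogeneous parts in degrees 0, 1, and 2, and its degree-3 homogeneous part equals a²c + 3ac² + c³. -/
open MvPolynomial

/-- The quintic `H(a,b,c)` with `b = 1` and `c` replaced by `c − 1`, moving the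
singular point `p = [0:1:-1]` to the origin of the chart `b = 1`. Here `X 0 = a`
and `X 1 = c`. -/
noncomputable def HLocalP : MvPolynomial (Fin 2) ℂ :=
  let a : MvPolynomial (Fin 2) ℂ := X 0
  let b : MvPolynomial (Fin 2) ℂ := 1
  let c : MvPolynomial (Fin 2) ℂ := X 1 - 1
  a^5 + 7*a^4*b + 18*a^3*b^2 + 21*a^2*b^3 + 11*a*b^4 + 2*b^5 +
  7*a^4*c + 33*a^3*b*c + 53*a^2*b^2*c + 35*a*b^3*c + 8*b^4*c +
  15*a^3*c^2 + 44*a^2*b*c^2 + 42*a*b^2*c^2 + 13*b^3*c^2 +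
  12*a^2*c^3 + 23*a*b*c^3 + 11*b^2*c^3 +
  5*a*c^4 + 5*b*c^4 + c^5

/-- A scaled monomial `C r * X 0 ^ i * X 1 ^ j` is homogeneous of degree `i + j`. -/
lemma hmon (r : ℂ) (i j n : ℕ) (h : i + j = n) :
    ((C r) * (X 0 : MvPolynomial (Fin 2) ℂ) ^ i * (X 1) ^ j).IsHomogeneous n := by
  subst h
  rw [mul_assoc]
  exact ((isHomogeneous_X_pow _ _).mul (isHomogeneous_X_pow _ _)).C_mul r

/-- Degree 3 part of the local equation. -/
noncomputable def q3 : MvPolynomial (Fin 2) ℂ :=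
  C 1 * X 0 ^ 2 * X 1 ^ 1 + C 3 * X 0 ^ 1 * X 1 ^ 2 + C 1 * X 0 ^ 0 * X 1 ^ 3

/-- Degree 4 part of the local equation. -/
noncomputable def q4 : MvPolynomial (Fin 2) ℂ :=
  C 3 * X 0 ^ 3 * X 1 ^ 1 + C 8 * X 0 ^ 2 * X 1 ^ 2 + C 3 * X 0 ^ 1 * X 1 ^ 3

/-- Degree 5 part of the local equation. -/
noncomputable def q5 : MvPolynomial (Fin 2) ℂ :=
  C 1 * X 0 ^ 5 * X 1 ^ 0 + C 7 * X 0 ^ 4 * X 1 ^ 1 + C 15 * X 0 ^ 3 * X 1 ^ 2 +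
  C 12 * X 0 ^ 2 * X 1 ^ 3 + C 5 * X 0 ^ 1 * X 1 ^ 4 + C 1 * X 0 ^ 0 * X 1 ^ 5

lemma q3_hom : (q3).IsHomogeneous 3 :=
  ((hmon 1 2 1 3 rfl).add (hmon 3 1 2 3 rfl)).add (hmon 1 0 3 3 rfl)

lemma q4_hom : (q4).IsHomogeneous 4 :=
  ((hmon 3 3 1 4 rfl).add (hmon 8 2 2 4 rfl)).add (hmon 3 1 3 4 rfl)

lemma q5_hom : (q5).IsHomogeneous 5 :=
  ((((( hmon 1 5 0 5 rfl).add (hmon 7 4 1 5 rfl)).add (hmon 15 3 2 5 rfl)).add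
    (hmon 12 2 3 5 rfl)).add (hmon 5 1 4 5 rfl)).add (hmon 1 0 5 5 rfl)

lemma HLocalP_eq : HLocalP = q3 + q4 + q5 := by
  unfold HLocalP q3 q4 q5
  simp only [map_ofNat, map_one]
  ring

/-- After moving `p = [0:1:-1]` to the origin of the chart `b = 1`, the local equation
of the quintic has vanishing homogeneous parts in degrees 0, 1 and 2, and its
degree-3 homogeneous part is `a²c + 3ac² + c³`; thus `p` has multiplicity 3. -/
theorem p_has_multiplicity_three :
    homogeneousComponent 0 HLocalP = 0 ∧
    homogeneousComponent 1 HLocalP = 0 ∧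
    homogeneousComponent 2 HLocalP = 0 ∧
    homogeneousComponent 3 HLocalP = (X 0)^2 * X 1 + 3 * (X 0) * (X 1)^2 + (X 1)^3 := by
  have key : ∀ n : ℕ, homogeneousComponent n HLocalP =
      (if n = 3 then q3 else 0) + (if n = 4 then q4 else 0) + (if n = 5 then q5 else 0) := by
    intro n
    rw [HLocalP_eq, map_add, map_add,
      homogeneousComponent_of_mem q3_hom, homogeneousComponent_of_mem q4_hom,
      homogeneousComponent_of_mem q5_hom]
  refine ⟨?_, ?_, ?_, ?_⟩
  · rw [key]; norm_num
  · rw [key]; norm_num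
  · rw [key]; norm_num
  · rw [key]; norm_num
    unfold q3
    simp only [map_ofNat, map_one]
    ring
end
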